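/- arXiv:1904.02389 — 6 statements merged into one kernel-verified Lean document; each statement's English description precedes it below -/
import Mathlib

section
/- If ψ(θ¹,θ²) = f(θ¹) + h(θ¹ - cθ²) with c ≠ 0 a constant and f, h smooth functions, then the left-hand side curvature expression R_{1212} vanishes identically; moreover its Fisher metric is g = [[f''+h'', -ch''], [-ch'', c²h'']], which is positive definite whenever f''h'' > 0 and f'' + (1+c²)h'' > 0. -/
open Real

noncomputable def pd1 (f : ℝ → ℝ → ℝ) : ℝ → ℝ → ℝ := fun t x => deriv (fun s => f s x) t
noncomputable def pd2 (f : ℝ → ℝ → ℝ) : ℝ → ℝ → ℝ := fun t x => deriv (fun s => f t s) x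
noncomputable def p11 (f : ℝ → ℝ → ℝ) : ℝ → ℝ → ℝ := pd1 (pd1 f)
noncomputable def p12 (f : ℝ → ℝ → ℝ) : ℝ → ℝ → ℝ := pd1 (pd2 f)
noncomputable def p22 (f : ℝ → ℝ → ℝ) : ℝ → ℝ → ℝ := pd2 (pd2 f)
noncomputable def p111 (f : ℝ → ℝ → ℝ) : ℝ → ℝ → ℝ := pd1 (p11 f)
noncomputable def p112 (f : ℝ → ℝ → ℝ) : ℝ → ℝ → ℝ := pd1 (p12 f)
noncomputable def p122 (f : ℝ → ℝ → ℝ) : ℝ → ℝ → ℝ := pd1 (p22 f)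
noncomputable def p222 (f : ℝ → ℝ → ℝ) : ℝ → ℝ → ℝ := pd2 (p22 f)

/-- Determinant of the Hessian (Fisher information metric) of a potential function. -/
noncomputable def detg (f : ℝ → ℝ → ℝ) : ℝ → ℝ → ℝ := fun t x =>
  p11 f t x * p22 f t x - (p12 f t x) ^ 2

/-- The numerator `4 det(g) · R_{1212}` of the curvature of a Hessian metric. -/
noncomputable def Rnum (f : ℝ → ℝ → ℝ) : ℝ → ℝ → ℝ := fun t x =>
  p11 f t x * (p112 f t x * p222 f t x - (p122 f t x) ^ 2)
  - p12 f t x * (p111 f t x * p222 f t x - p112 f t x * p122 f t x)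
  + p22 f t x * (p111 f t x * p122 f t x - (p112 f t x) ^ 2)

lemma key1 (F G : ℝ → ℝ) (hF : ContDiff ℝ (⊤ : ℕ∞) F) (hG : ContDiff ℝ (⊤ : ℕ∞) G)
    (a c : ℝ) :
    pd1 (fun t x => F t + a * G (t - c * x)) =
      fun t x => deriv F t + a * deriv G (t - c * x) := by
  funext t x
  have h1 : HasDerivAt (fun s : ℝ => F s + a * G (s - c * x))
      (deriv F t + a * deriv G (t - c * x)) t := by
    have hFd : HasDerivAt F (deriv F t) t :=
      (hF.differentiable (by simp) t).hasDerivAt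
    have hu : HasDerivAt (fun s : ℝ => s - c * x) 1 t :=
      (hasDerivAt_id t).sub_const (c * x)
    have hGd : HasDerivAt (fun s : ℝ => G (s - c * x))
        (deriv G (t - c * x) * 1) t :=
      ((hG.differentiable (by simp) (t - c * x)).hasDerivAt).comp t hu
    exact (hFd.add (hGd.const_mul a)).congr_deriv (by ring)
  simp only [pd1]
  rw [h1.deriv]

lemma key2 (F G : ℝ → ℝ) (hG : ContDiff ℝ (⊤ : ℕ∞) G) (a c : ℝ) :
    pd2 (fun t x => F t + a * G (t - c * x)) =
      fun t x => (-(c * a)) * deriv G (t - c * x) := by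
  funext t x
  have h1 : HasDerivAt (fun s : ℝ => F t + a * G (t - c * s))
      ((-(c * a)) * deriv G (t - c * x)) x := by
    have hu : HasDerivAt (fun s : ℝ => t - c * s) (-c) x := by
      simpa using ((hasDerivAt_id x).const_mul c).const_sub t
    have hGd : HasDerivAt (fun s : ℝ => G (t - c * s))
        (deriv G (t - c * x) * (-c)) x :=
      ((hG.differentiable (by simp) (t - c * x)).hasDerivAt).comp x hu
    have h2 := (hGd.const_mul a).const_add (F t)
    exact h2.congr_deriv (by ring)
  simp only [pd2]
  rw [h1.deriv]

lemma key1' (G : ℝ → ℝ) (hG : ContDiff ℝ (⊤ : ℕ∞) G) (a c : ℝ) :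
    pd1 (fun t x => a * G (t - c * x)) = fun t x => a * deriv G (t - c * x) := by
  have h := key1 (fun _ => 0) G contDiff_const hG a c
  simpa using h

lemma key2' (G : ℝ → ℝ) (hG : ContDiff ℝ (⊤ : ℕ∞) G) (a c : ℝ) :
    pd2 (fun t x => a * G (t - c * x)) = fun t x => (-(c * a)) * deriv G (t - c * x) := by
  have h := key2 (fun _ => 0) G hG a c
  simpa using h

/-- For `ψ(θ¹,θ²) = f(θ¹) + h(θ¹ - cθ²)` with `c ≠ 0`, the curvature expression
`R_{1212}` vanishes identically, the Fisher metric is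
`[[f''+h'', -ch''], [-ch'', c²h'']]`, and the latter is positive definite whenever
`f''h'' > 0` and `f'' + (1+c²)h'' > 0`. -/
theorem sum_travelling_ansatz (f h : ℝ → ℝ) (c : ℝ) (hc : c ≠ 0)
    (hf : ContDiff ℝ (⊤ : ℕ∞) f) (hh : ContDiff ℝ (⊤ : ℕ∞) h) :
    let ψ : ℝ → ℝ → ℝ := fun t x => f t + h (t - c * x)
    ∀ t x, Rnum ψ t x = 0 ∧
      (!![p11 ψ t x, p12 ψ t x; p12 ψ t x, p22 ψ t x] : Matrix (Fin 2) (Fin 2) ℝ)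
        = !![deriv^[2] f t + deriv^[2] h (t - c * x), -c * deriv^[2] h (t - c * x);
             -c * deriv^[2] h (t - c * x), c ^ 2 * deriv^[2] h (t - c * x)] ∧
      (0 < deriv^[2] f t * deriv^[2] h (t - c * x) →
       0 < deriv^[2] f t + (1 + c ^ 2) * deriv^[2] h (t - c * x) →
       (!![deriv^[2] f t + deriv^[2] h (t - c * x), -c * deriv^[2] h (t - c * x);
           -c * deriv^[2] h (t - c * x), c ^ 2 * deriv^[2] h (t - c * x)] :
           Matrix (Fin 2) (Fin 2) ℝ).PosDef) := by
  intro ψ t x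
  have hfn : ∀ n : ℕ, ContDiff ℝ (⊤ : ℕ∞) (deriv^[n] f) := fun n =>
    ContDiff.iterate_deriv n (hf.of_le (by simp))
  have hhn : ∀ n : ℕ, ContDiff ℝ (⊤ : ℕ∞) (deriv^[n] h) := fun n =>
    ContDiff.iterate_deriv n (hh.of_le (by simp))
  have hψ : ψ = fun t x => f t + 1 * h (t - c * x) := by funext t x; ring
  -- first derivatives
  have e1 : pd1 ψ = fun t x => deriv f t + 1 * deriv h (t - c * x) := by
    rw [hψ]; exact key1 f h (hfn 0) (hhn 0) 1 c
  have e2 : pd2 ψ = fun t x => (-(c * 1)) * deriv h (t - c * x) := by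
    rw [hψ]; exact key2 f h (hhn 0) 1 c
  -- second derivatives
  have e11 : p11 ψ = fun t x => deriv^[2] f t + 1 * deriv^[2] h (t - c * x) := by
    unfold p11; rw [e1]
    have := key1 (deriv f) (deriv h) (hfn 1) (hhn 1) 1 c
    rw [this]
    funext t x
    simp [Function.iterate_succ_apply']
  have e12 : p12 ψ = fun t x => (-(c * 1)) * deriv^[2] h (t - c * x) := by
    unfold p12; rw [e2]
    have := key1' (deriv h) (hhn 1) (-(c * 1)) c
    rw [this]
    funext t x
    simp [Function.iterate_succ_apply']
  have e22 : p22 ψ = fun t x => (-(c * -(c * 1))) * deriv^[2] h (t - c * x) := by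
    unfold p22; rw [e2]
    have := key2' (deriv h) (hhn 1) (-(c * 1)) c
    rw [this]
    funext t x
    simp [Function.iterate_succ_apply']
  -- third derivatives
  have e111 : p111 ψ = fun t x => deriv^[3] f t + 1 * deriv^[3] h (t - c * x) := by
    unfold p111; rw [e11]
    have := key1 (deriv^[2] f) (deriv^[2] h) (hfn 2) (hhn 2) 1 c
    rw [this]
    funext t x
    simp [Function.iterate_succ_apply']
  have e112 : p112 ψ = fun t x => (-(c * 1)) * deriv^[3] h (t - c * x) := by
    unfold p112; rw [e12]
    have := key1' (deriv^[2] h) (hhn 2) (-(c * 1)) c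
    rw [this]
    funext t x
    simp [Function.iterate_succ_apply']
  have e122 : p122 ψ = fun t x => (-(c * -(c * 1))) * deriv^[3] h (t - c * x) := by
    unfold p122; rw [e22]
    have := key1' (deriv^[2] h) (hhn 2) (-(c * -(c * 1))) c
    rw [this]
    funext t x
    simp [Function.iterate_succ_apply']
  have e222 : p222 ψ = fun t x => (-(c * -(c * -(c * 1)))) * deriv^[3] h (t - c * x) := by
    unfold p222; rw [e22]
    have := key2' (deriv^[2] h) (hhn 2) (-(c * -(c * 1))) c
    rw [this]
    funext t x
    simp [Function.iterate_succ_apply']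
  set a := deriv^[2] f t with ha
  set b := deriv^[2] h (t - c * x) with hb
  refine ⟨?_, ?_, ?_⟩
  · simp only [Rnum, e11, e12, e22, e111, e112, e122, e222]
    ring
  · have h11 : p11 ψ t x = a + b := by rw [e11]; ring
    have h12 : p12 ψ t x = -c * b := by rw [e12]; ring
    have h22 : p22 ψ t x = c ^ 2 * b := by rw [e22]; ring
    rw [h11, h12, h22]
  · intro hab hsum
    -- first show a > 0 and b > 0
    have hapos : 0 < a ∧ 0 < b := by
      rcases mul_pos_iff.mp hab with ⟨ha1, hb1⟩ | ⟨ha1, hb1⟩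
      · exact ⟨ha1, hb1⟩
      · exfalso
        nlinarith [sq_nonneg c]
    obtain ⟨ha1, hb1⟩ := hapos
    refine Matrix.PosDef.of_dotProduct_mulVec_pos ?_ ?_
    · show Matrix.conjTranspose _ = _
      ext i j
      fin_cases i <;> fin_cases j <;> simp
    · intro v hv
      have hv' : v 0 ≠ 0 ∨ v 1 ≠ 0 := by
        by_contra hcon
        push_neg at hcon
        apply hv
        funext i
        fin_cases i <;> simp [hcon.1, hcon.2]
      have hq : dotProduct (star v)
          ((!![a + b, -c * b; -c * b, c ^ 2 * b] : Matrix (Fin 2) (Fin 2) ℝ).mulVec v)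
          = a * (v 0) ^ 2 + b * (v 0 - c * v 1) ^ 2 := by
        simp [dotProduct, Matrix.mulVec, Fin.sum_univ_two]
        ring
      rw [hq]
      rcases hv' with h0 | h1
      · have hp : 0 < a * (v 0) ^ 2 := mul_pos ha1 (by positivity)
        nlinarith [sq_nonneg (v 0 - c * v 1)]
      · rcases eq_or_ne (v 0) 0 with h0 | h0
        · have hz : v 0 - c * v 1 ≠ 0 := by
            rw [h0]
            simpa using mul_ne_zero hc h1
          have hp : 0 < b * (v 0 - c * v 1) ^ 2 := mul_pos hb1 (by positivity)
          nlinarith [sq_nonneg (v 0)]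
        · have hp : 0 < a * (v 0) ^ 2 := mul_pos ha1 (by positivity)
          nlinarith [sq_nonneg (v 0 - c * v 1)]
end

section
/- Let h be a smooth positive function with h' ≠ 0 and h'' ≠ 0 satisfying h'²/(h h'') = c₁ for a constant c₁ ∉ {0, 1}. Then on any interval where it is defined, h has the form h(θ) = (c₂θ - c₃)^{c₁/(c₁-1)} for some constants c₂ ≠ 0, c₃. -/
/-- Functions with vanishing derivative on an open interval are constant there. -/
lemma const_of_hasDerivAt_zero {f : ℝ → ℝ} {a b : ℝ}
    (hf : ∀ x ∈ Set.Ioo a b, HasDerivAt f 0 x) :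
    ∀ x ∈ Set.Ioo a b, ∀ y ∈ Set.Ioo a b, f x = f y := by
  intro x hx y hy
  refine (convex_Ioo a b).is_const_of_fderivWithin_eq_zero
    (fun z hz => (hf z hz).differentiableAt.differentiableWithinAt) (fun z hz => ?_) hx hy
  have h1 : HasFDerivWithinAt f ((1 : ℝ →L[ℝ] ℝ).smulRight 0) (Set.Ioo a b) z :=
    ((hf z hz).hasDerivWithinAt : HasDerivWithinAt f 0 (Set.Ioo a b) z).hasFDerivWithinAt
  rw [h1.fderivWithin (isOpen_Ioo.uniqueDiffWithinAt hz)]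
  ext
  simp


/-- If a smooth positive function `h` with nonvanishing `h'`, `h''` satisfies
`h'²/(hh'') = c₁` on an interval, where `c₁ ∉ {0,1}`, then on that interval
`h(θ) = (c₂θ - c₃)^{c₁/(c₁-1)}` for some constants `c₂ ≠ 0`, `c₃`. -/
theorem ode_power_solution (h : ℝ → ℝ) (hh : ContDiff ℝ (⊤ : ℕ∞) h) (a b c1 : ℝ) (hab : a < b)
    (hc0 : c1 ≠ 0) (hc1 : c1 ≠ 1)
    (hpos : ∀ θ ∈ Set.Ioo a b, 0 < h θ)
    (hd1 : ∀ θ ∈ Set.Ioo a b, deriv h θ ≠ 0)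
    (hd2 : ∀ θ ∈ Set.Ioo a b, deriv^[2] h θ ≠ 0)
    (hode : ∀ θ ∈ Set.Ioo a b, (deriv h θ) ^ 2 / (h θ * deriv^[2] h θ) = c1) :
    ∃ c2 c3 : ℝ, c2 ≠ 0 ∧
      ∀ θ ∈ Set.Ioo a b, h θ = Real.rpow (c2 * θ - c3) (c1 / (c1 - 1)) := by
  have hc1' : c1 - 1 ≠ 0 := sub_ne_zero.mpr hc1
  set α : ℝ := (c1 - 1) / c1 with hα
  have hαne : α ≠ 0 := div_ne_zero hc1' hc0
  have hTop : ContDiff ℝ (⊤ : ℕ∞) h := hh.of_le (by simp)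
  have hdiff : Differentiable ℝ h := hh.differentiable (by simp)
  have hD : ContDiff ℝ (⊤ : ℕ∞) (deriv h) := (contDiff_infty_iff_deriv.mp hTop).2
  have hDdiff : Differentiable ℝ (deriv h) := hD.differentiable (by simp)
  have hiter : ∀ θ, deriv^[2] h θ = deriv (deriv h) θ := fun θ => by
    rw [Function.iterate_succ_apply', Function.iterate_one]
  set u : ℝ → ℝ := fun θ => h θ ^ α with hu
  set w : ℝ → ℝ := fun θ => deriv h θ * α * h θ ^ (α - 1) with hw
  have hderivu : ∀ θ ∈ Set.Ioo a b, HasDerivAt u (w θ) θ := fun θ hθ =>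
    (hdiff θ).hasDerivAt.rpow_const (Or.inl (hpos θ hθ).ne')
  have hderivw : ∀ θ ∈ Set.Ioo a b, HasDerivAt w 0 θ := by
    intro θ hθ
    have hp := hpos θ hθ
    have h1 : HasDerivAt (fun t => deriv h t * α) (deriv^[2] h θ * α) θ := by
      rw [hiter]; exact (hDdiff θ).hasDerivAt.mul_const α
    have h2 : HasDerivAt (fun t => h t ^ (α - 1))
        (deriv h θ * (α - 1) * h θ ^ (α - 1 - 1)) θ :=
      (hdiff θ).hasDerivAt.rpow_const (Or.inl hp.ne')
    have h3 := h1.mul h2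
    have E : deriv h θ ^ 2 = c1 * (h θ * deriv^[2] h θ) := by
      have h0 : h θ * deriv^[2] h θ ≠ 0 := mul_ne_zero (hpos θ hθ).ne' (hd2 θ hθ)
      have := hode θ hθ
      rw [div_eq_iff h0] at this
      linarith
    have h1c : 1 + c1 * (α - 1) = 0 := by rw [hα]; field_simp; ring
    have key : deriv^[2] h θ * α * h θ + deriv h θ * α * (deriv h θ * (α - 1)) = 0 := by
      linear_combination (α * (α - 1)) * E + (α * h θ * deriv^[2] h θ) * h1c
    have e1 : h θ ^ (α - 1) = h θ ^ (α - 1 - 1) * h θ := by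
      rw [← Real.rpow_add_one hp.ne' (α - 1 - 1)]
      norm_num
    refine (show HasDerivAt w _ θ from h3).congr_deriv ?_
    rw [e1]
    linear_combination (h θ ^ (α - 1 - 1)) * key
  set θ0 : ℝ := (a + b) / 2 with hθ0
  have hθ0mem : θ0 ∈ Set.Ioo a b := ⟨by simp only [hθ0]; linarith, by simp only [hθ0]; linarith⟩
  set c2 : ℝ := w θ0 with hc2
  have hc2ne : c2 ≠ 0 := by
    refine mul_ne_zero (mul_ne_zero (hd1 θ0 hθ0mem) hαne) ?_
    exact (Real.rpow_pos_of_pos (hpos θ0 hθ0mem) _).ne'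
  have hwconst : ∀ θ ∈ Set.Ioo a b, w θ = c2 := fun θ hθ =>
    const_of_hasDerivAt_zero hderivw θ hθ θ0 hθ0mem
  set v : ℝ → ℝ := fun θ => u θ - c2 * θ with hv
  have hderivv : ∀ θ ∈ Set.Ioo a b, HasDerivAt v 0 θ := by
    intro θ hθ
    have := (hderivu θ hθ).sub ((hasDerivAt_id θ).const_mul c2)
    rw [hwconst θ hθ] at this
    simp at this
    exact this
  set c3 : ℝ := c2 * θ0 - u θ0 with hc3
  refine ⟨c2, c3, hc2ne, fun θ hθ => ?_⟩
  have hvθ : v θ = v θ0 := const_of_hasDerivAt_zero hderivv θ hθ θ0 hθ0mem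
  have huθ : c2 * θ - c3 = u θ := by
    have : u θ - c2 * θ = u θ0 - c2 * θ0 := hvθ
    rw [hc3]; linarith
  have hp := hpos θ hθ
  show h θ = (c2 * θ - c3) ^ (c1 / (c1 - 1))
  rw [huθ]
  show h θ = (h θ ^ α) ^ (c1 / (c1 - 1))
  have hαβ : α * (c1 / (c1 - 1)) = 1 := by rw [hα]; field_simp
  rw [← Real.rpow_mul hp.le, hαβ, Real.rpow_one]
end

section
/- The function ψ(θ¹,θ²) = (θ¹ - c₅)^{c₄}(θ² - c₃)² with θ¹ > c₅, θ² ≠ c₃, and -1 < c₄ < 0 satisfies the zero-curvature equation for product-type potentials and is convex (its Hessian is positive definite) on its domain. -/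
open Real

lemma hasDerivAt_pow_shift (c5 p : ℝ) {s : ℝ} (hs : c5 < s) :
    HasDerivAt (fun t : ℝ => (t - c5) ^ p) (p * (s - c5) ^ (p - 1)) s := by
  have h1 : HasDerivAt (fun t : ℝ => t - c5) 1 s := (hasDerivAt_id s).sub_const c5
  have h2 := Real.hasDerivAt_rpow_const (p := p) (x := s - c5)
    (Or.inl (ne_of_gt (sub_pos.mpr hs)))
  simpa [Function.comp_def] using h2.comp s h1

lemma deriv_pow_shift (c5 p a : ℝ) {s : ℝ} (hs : c5 < s) :
    deriv (fun t : ℝ => a * (t - c5) ^ p) s = a * p * (s - c5) ^ (p - 1) := by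
  rw [((hasDerivAt_pow_shift c5 p hs).const_mul a).deriv]; ring

lemma deriv2_pow_shift (c5 p a : ℝ) {s : ℝ} (hs : c5 < s) :
    deriv (deriv (fun t : ℝ => a * (t - c5) ^ p)) s
      = a * p * (p - 1) * (s - c5) ^ (p - 2) := by
  have hev : deriv (fun t : ℝ => a * (t - c5) ^ p)
      =ᶠ[nhds s] fun t => a * p * (t - c5) ^ (p - 1) := by
    filter_upwards [Ioi_mem_nhds hs] with t ht
    exact deriv_pow_shift c5 p a ht
  rw [hev.deriv_eq, deriv_pow_shift c5 (p - 1) (a * p) hs]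
  ring_nf

lemma deriv3_pow_shift (c5 p a : ℝ) {s : ℝ} (hs : c5 < s) :
    deriv (deriv (deriv (fun t : ℝ => a * (t - c5) ^ p))) s
      = a * p * (p - 1) * (p - 2) * (s - c5) ^ (p - 3) := by
  have hev : deriv (deriv (fun t : ℝ => a * (t - c5) ^ p))
      =ᶠ[nhds s] fun t => a * p * (p - 1) * (t - c5) ^ (p - 2) := by
    filter_upwards [Ioi_mem_nhds hs] with t ht
    exact deriv2_pow_shift c5 p a ht
  rw [hev.deriv_eq, deriv_pow_shift c5 (p - 2) (a * p * (p - 1)) hs]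
  ring_nf

/-- The potential `ψ(θ¹,θ²) = (θ¹-c₅)^{c₄}(θ²-c₃)²` with `θ¹ > c₅`, `θ² ≠ c₃` and
`-1 < c₄ < 0` satisfies the zero-curvature equation for product potentials and its
Hessian is positive definite on this domain. -/
theorem power_product_solution (c3 c4 c5 : ℝ) (hc4 : -1 < c4) (hc4' : c4 < 0) :
    let f : ℝ → ℝ := fun s => Real.rpow (s - c5) c4
    let h : ℝ → ℝ := fun s => (s - c3) ^ 2
    let ψ : ℝ → ℝ → ℝ := fun a b => f a * h b
    ∀ θ1 θ2, c5 < θ1 → θ2 ≠ c3 →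
      (f θ1 * ((deriv^[2] f θ1) ^ 2 - deriv f θ1 * deriv^[3] f θ1)
          * (h θ2 * deriv h θ2 * deriv^[3] h θ2)
        + deriv f θ1 * (f θ1 * deriv^[3] f θ1 - deriv f θ1 * deriv^[2] f θ1)
          * (h θ2 * (deriv^[2] h θ2) ^ 2)
        + deriv^[2] f θ1 * ((deriv f θ1) ^ 2 - f θ1 * deriv^[2] f θ1)
          * ((deriv h θ2) ^ 2 * deriv^[2] h θ2) = 0)
      ∧ 0 < p11 ψ θ1 θ2 ∧ 0 < p22 ψ θ1 θ2 ∧ 0 < detg ψ θ1 θ2 := by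
  intro f h ψ θ1 θ2 hθ1 hθ2
  have hu : (0:ℝ) < θ1 - c5 := sub_pos.mpr hθ1
  have hv : θ2 - c3 ≠ 0 := sub_ne_zero.mpr hθ2
  have hfeq : f = fun t : ℝ => 1 * (t - c5) ^ c4 := by
    funext t; simp [f, Real.rpow_def_of_pos]
  -- f derivatives
  have hf0 : f θ1 = (θ1 - c5) ^ c4 := rfl
  have hf1 : deriv f θ1 = 1 * c4 * (θ1 - c5) ^ (c4 - 1) := by
    rw [hfeq]; exact deriv_pow_shift c5 c4 1 hθ1
  have hf2 : deriv^[2] f θ1 = 1 * c4 * (c4 - 1) * (θ1 - c5) ^ (c4 - 2) := by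
    rw [hfeq]; exact deriv2_pow_shift c5 c4 1 hθ1
  have hf3 : deriv^[3] f θ1 = 1 * c4 * (c4 - 1) * (c4 - 2) * (θ1 - c5) ^ (c4 - 3) := by
    rw [hfeq]; exact deriv3_pow_shift c5 c4 1 hθ1
  -- h derivatives
  have hh1 : deriv h = fun s => 2 * (s - c3) := by
    funext s
    have := (((hasDerivAt_id s).sub_const c3).pow 2).deriv
    simpa [h] using this
  have hh2 : deriv^[2] h = fun _ : ℝ => (2:ℝ) := by
    show deriv (deriv h) = _
    rw [hh1]; funext s
    simpa using (((hasDerivAt_id s).sub_const c3).const_mul 2).deriv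
  have hh3 : deriv^[3] h = fun _ : ℝ => (0:ℝ) := by
    show deriv (deriv^[2] h) = _
    rw [hh2]; funext s; simp
  -- rpow exponent decompositions
  have e1 : (θ1 - c5) ^ (c4 - 1) = (θ1 - c5) ^ c4 / (θ1 - c5) := by
    rw [Real.rpow_sub hu, Real.rpow_one]
  have e2 : (θ1 - c5) ^ (c4 - 2) = (θ1 - c5) ^ c4 / (θ1 - c5) ^ (2:ℕ) := by
    rw [Real.rpow_sub hu, show ((2:ℝ)) = ((2:ℕ):ℝ) by norm_num, Real.rpow_natCast]
  have e3 : (θ1 - c5) ^ (c4 - 3) = (θ1 - c5) ^ c4 / (θ1 - c5) ^ (3:ℕ) := by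
    rw [Real.rpow_sub hu, show ((3:ℝ)) = ((3:ℕ):ℝ) by norm_num, Real.rpow_natCast]
  have hA : (0:ℝ) < (θ1 - c5) ^ c4 := Real.rpow_pos_of_pos hu c4
  have hv2 : (0:ℝ) < (θ2 - c3) ^ 2 :=
    lt_of_le_of_ne (sq_nonneg _) (Ne.symm (pow_ne_zero 2 hv))
  -- partial derivatives of ψ
  have hψ11 : p11 ψ θ1 θ2 = deriv^[2] f θ1 * h θ2 := by
    simp only [p11, pd1, ψ]
    have : (fun s => deriv (fun t => f t * h θ2) s) = fun s => deriv f s * h θ2 := by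
      funext s; exact deriv_mul_const_field _
    rw [this, deriv_mul_const_field]
    rfl
  have hψ22 : p22 ψ θ1 θ2 = f θ1 * deriv^[2] h θ2 := by
    simp only [p22, pd2, ψ]
    have : (fun x => deriv (fun s => f θ1 * h s) x) = fun x => f θ1 * deriv h x := by
      funext x; exact deriv_const_mul_field _
    rw [this, deriv_const_mul_field]
    rfl
  have hψ12 : p12 ψ θ1 θ2 = deriv f θ1 * deriv h θ2 := by
    simp only [p12, pd1, pd2, ψ]
    have : (fun s => deriv (fun x => f s * h x) θ2) = fun s => f s * deriv h θ2 := by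
      funext s; exact deriv_const_mul_field _
    rw [this, deriv_mul_const_field]
  have hh : h θ2 = (θ2 - c3) ^ 2 := rfl
  refine ⟨?_, ?_, ?_, ?_⟩
  · rw [hf0, hf1, hf2, hf3, hh, hh1, hh2, hh3]
    simp only
    rw [e1, e2, e3]
    field_simp
    ring
  · rw [hψ11, hf2, hh]
    have hc : 0 < 1 * c4 * (c4 - 1) := by nlinarith
    positivity
  · rw [hψ22, hf0, hh2]
    positivity
  · rw [detg, hψ11, hψ22, hψ12, hf0, hf1, hf2, hh, hh1, hh2]
    simp only
    rw [e1, e2]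
    have key : (1 * c4 * (c4 - 1) * ((θ1 - c5) ^ c4 / (θ1 - c5) ^ (2:ℕ))) * ((θ2 - c3)^2)
        * ((θ1 - c5) ^ c4 * 2)
        - (1 * c4 * ((θ1 - c5) ^ c4 / (θ1 - c5)) * (2 * (θ2 - c3))) ^ 2
        = ((θ1 - c5) ^ c4) ^ 2 * (θ2 - c3) ^ 2 / (θ1 - c5) ^ 2
          * (2 * (-c4) * (c4 + 1)) := by
      field_simp
      ring
    rw [key]
    have h1 : (0:ℝ) < 2 * (-c4) * (c4 + 1) := by nlinarith
    positivity
end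

section
/- Each of the nine vector fields X₁ = ∂_t, X₂ = ∂_x, X₃ = ∂_ψ, X₄ = t∂_t, X₅ = x∂_x, X₆ = x∂_t, X₇ = t∂_x, X₈ = t∂_ψ, X₉ = x∂_ψ generates a one-parameter group of point transformations mapping solutions of the curvature PDE ψ_tt(ψ_ttx ψ_xxx - ψ_txx²) - ψ_tx(ψ_ttt ψ_xxx - ψ_ttx ψ_txx) + ψ_xx(ψ_ttt ψ_txx - ψ_ttx²) = 4λ(ψ_tt ψ_xx - ψ_tx²)² to solutions. In particular, if ψ(t,x) solves the equation, then so do ψ(t+ε, x), ψ(t, x+ε), ψ(e^ε t, x), ψ(t, e^ε x), ψ(t,x) + ε, ψ(t,x) + εt, ψ(t,x) + εx, and ψ composed with the shears (t,x) ↦ (t + εx, x) and (t,x) ↦ (t, x + εt). -/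
open Real

/-- `ψ` is a solution of the constant-curvature PDE
`ψ_tt(ψ_ttx ψ_xxx - ψ_txx²) - ψ_tx(ψ_ttt ψ_xxx - ψ_ttx ψ_txx) + ψ_xx(ψ_ttt ψ_txx - ψ_ttx²)
 = 4λ(ψ_tt ψ_xx - ψ_tx²)²`. -/
def IsSol (lam : ℝ) (ψ : ℝ → ℝ → ℝ) : Prop :=
  ∀ t x, Rnum ψ t x = 4 * lam * (detg ψ t x) ^ 2

noncomputable def Dv (v : ℝ × ℝ) (Φ : ℝ × ℝ → ℝ) : ℝ × ℝ → ℝ := fun p => fderiv ℝ Φ p v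

lemma Dv_smooth (v : ℝ × ℝ) {Φ : ℝ × ℝ → ℝ} (h : ContDiff ℝ (⊤ : ℕ∞) Φ) : ContDiff ℝ (⊤ : ℕ∞) (Dv v Φ) :=
  (h.fderiv_right (by simp)).clm_apply contDiff_const

lemma Dv_expand (u : ℝ × ℝ) (Φ : ℝ × ℝ → ℝ) (p : ℝ × ℝ) :
    Dv u Φ p = u.1 * Dv (1,0) Φ p + u.2 * Dv (0,1) Φ p := by
  obtain ⟨ua, ub⟩ := u
  have hu : ((ua, ub) : ℝ × ℝ) = ua • ((1:ℝ),(0:ℝ)) + ub • ((0:ℝ),(1:ℝ)) := by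
    simp [Prod.ext_iff]
  show fderiv ℝ Φ p (ua, ub) = _
  rw [hu, map_add, map_smul, map_smul]
  simp [Dv, smul_eq_mul]

lemma Dv_comb3 {F G H : ℝ × ℝ → ℝ} (hF : ContDiff ℝ (⊤ : ℕ∞) F) (hG : ContDiff ℝ (⊤ : ℕ∞) G)
    (hH : ContDiff ℝ (⊤ : ℕ∞) H) (x1 x2 x3 : ℝ) (v p : ℝ × ℝ) :
    Dv v (fun q => x1 * F q + x2 * G q + x3 * H q) p
      = x1 * Dv v F p + x2 * Dv v G p + x3 * Dv v H p := by
  have h1 := ((hF.differentiable (by simp) p).hasFDerivAt.const_mul x1)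
  have h2 := ((hG.differentiable (by simp) p).hasFDerivAt.const_mul x2)
  have h3 := ((hH.differentiable (by simp) p).hasFDerivAt.const_mul x3)
  have : fderiv ℝ (fun q => x1 * F q + x2 * G q + x3 * H q) p = _ := ((h1.add h2).add h3).fderiv
  show fderiv ℝ _ p v = _
  rw [this]
  simp [Dv, smul_eq_mul]

lemma Dv_symm {Φ : ℝ × ℝ → ℝ} (h : ContDiff ℝ (⊤ : ℕ∞) Φ) (p : ℝ × ℝ) :
    Dv (1,0) (Dv (0,1) Φ) p = Dv (0,1) (Dv (1,0) Φ) p := by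
  have hd : ∀ q, DifferentiableAt ℝ (fderiv ℝ Φ) q := fun q =>
    ((h.fderiv_right (m := (⊤ : ℕ∞)) (by simp)).differentiable (by simp) q)
  have hsym := second_derivative_symmetric
    (f := Φ) (f' := fderiv ℝ Φ) (f'' := fderiv ℝ (fderiv ℝ Φ) p)
    (fun y => (h.differentiable (by simp) y).hasFDerivAt) ((hd p).hasFDerivAt)
  have h1 : Dv (1,0) (Dv (0,1) Φ) p = fderiv ℝ (fderiv ℝ Φ) p (1,0) (0,1) := by
    show fderiv ℝ (fun q => fderiv ℝ Φ q (0,1)) p (1,0) = _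
    rw [fderiv_clm_apply (hd p) (differentiableAt_const _)]; simp
  have h2 : Dv (0,1) (Dv (1,0) Φ) p = fderiv ℝ (fderiv ℝ Φ) p (0,1) (1,0) := by
    show fderiv ℝ (fun q => fderiv ℝ Φ q (1,0)) p (0,1) = _
    rw [fderiv_clm_apply (hd p) (differentiableAt_const _)]; simp
  rw [h1, h2, hsym]

lemma pd1_comp {Φ : ℝ × ℝ → ℝ} (h : ContDiff ℝ (⊤ : ℕ∞) Φ) (a b c d e f : ℝ) :
    pd1 (fun t x => Φ (a*t+b*x+c, d*t+e*x+f))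
      = fun t x => Dv (a,d) Φ (a*t+b*x+c, d*t+e*x+f) := by
  funext t x
  have h1 : HasDerivAt (fun s : ℝ => ((a*s+b*x+c, d*s+e*x+f) : ℝ × ℝ)) (a, d) t := by
    have := HasDerivAt.prodMk (((hasDerivAt_id t).const_mul a).add_const (b*x+c))
      (((hasDerivAt_id t).const_mul d).add_const (e*x+f)); simpa [add_assoc] using this
  have h2 := ((h.differentiable (by simp) (a*t+b*x+c, d*t+e*x+f)).hasFDerivAt).comp_hasDerivAt t h1
  simpa [pd1, Dv, mul_comm, Function.comp_def] using h2.deriv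

lemma pd2_comp {Φ : ℝ × ℝ → ℝ} (h : ContDiff ℝ (⊤ : ℕ∞) Φ) (a b c d e f : ℝ) :
    pd2 (fun t x => Φ (a*t+b*x+c, d*t+e*x+f))
      = fun t x => Dv (b,e) Φ (a*t+b*x+c, d*t+e*x+f) := by
  funext t x
  have h1 : HasDerivAt (fun s : ℝ => ((a*t+b*s+c, d*t+e*s+f) : ℝ × ℝ)) (b, e) x := by
    have := HasDerivAt.prodMk ((((hasDerivAt_id x).const_mul b).const_add (a*t)).add_const c)
      ((((hasDerivAt_id x).const_mul e).const_add (d*t)).add_const f); simpa [add_assoc] using this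
  have h2 := ((h.differentiable (by simp) (a*t+b*x+c, d*t+e*x+f)).hasFDerivAt).comp_hasDerivAt x h1
  simpa [pd2, Dv, mul_comm, Function.comp_def] using h2.deriv

lemma pd1_id {Φ : ℝ × ℝ → ℝ} (h : ContDiff ℝ (⊤ : ℕ∞) Φ) :
    pd1 (fun t x => Φ (t,x)) = fun t x => Dv (1,0) Φ (t,x) := by
  have h0 : (fun t x : ℝ => Φ (t,x)) = fun t x => Φ (1*t+0*x+0, 0*t+1*x+0) := by
    funext t x; norm_num
  rw [h0, pd1_comp h]; funext t x; norm_num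

lemma pd2_id {Φ : ℝ × ℝ → ℝ} (h : ContDiff ℝ (⊤ : ℕ∞) Φ) :
    pd2 (fun t x => Φ (t,x)) = fun t x => Dv (0,1) Φ (t,x) := by
  have h0 : (fun t x : ℝ => Φ (t,x)) = fun t x => Φ (1*t+0*x+0, 0*t+1*x+0) := by
    funext t x; norm_num
  rw [h0, pd2_comp h]; funext t x; norm_num

lemma D2_expand {Φ : ℝ × ℝ → ℝ} (h : ContDiff ℝ (⊤ : ℕ∞) Φ) (u w : ℝ × ℝ) (p : ℝ × ℝ) :
    Dv u (Dv w Φ) p = u.1*w.1 * Dv (1,0) (Dv (1,0) Φ) p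
      + (u.1*w.2 + u.2*w.1) * Dv (1,0) (Dv (0,1) Φ) p
      + u.2*w.2 * Dv (0,1) (Dv (0,1) Φ) p := by
  have hw : Dv w Φ = fun q => w.1 * Dv (1,0) Φ q + w.2 * Dv (0,1) Φ q + 0 * Dv (0,1) Φ q := by
    funext q; rw [Dv_expand]; ring
  rw [Dv_expand u, hw,
    Dv_comb3 (Dv_smooth _ h) (Dv_smooth _ h) (Dv_smooth _ h),
    Dv_comb3 (Dv_smooth _ h) (Dv_smooth _ h) (Dv_smooth _ h),
    Dv_symm h p]
  ring

lemma D3_expand {Φ : ℝ × ℝ → ℝ} (h : ContDiff ℝ (⊤ : ℕ∞) Φ) (u v w : ℝ × ℝ) (p : ℝ × ℝ) :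
    Dv u (Dv v (Dv w Φ)) p
      = (u.1*v.1*w.1) * Dv (1,0) (Dv (1,0) (Dv (1,0) Φ)) p
      + (u.1*v.1*w.2 + u.1*v.2*w.1 + u.2*v.1*w.1) * Dv (1,0) (Dv (1,0) (Dv (0,1) Φ)) p
      + (u.1*v.2*w.2 + u.2*v.1*w.2 + u.2*v.2*w.1) * Dv (1,0) (Dv (0,1) (Dv (0,1) Φ)) p
      + (u.2*v.2*w.2) * Dv (0,1) (Dv (0,1) (Dv (0,1) Φ)) p := by
  have s1 : Dv (0,1) (Dv (1,0) Φ) = Dv (1,0) (Dv (0,1) Φ) := (funext (Dv_symm h)).symm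
  have hvw : Dv v (Dv w Φ) = fun q => (v.1*w.1) * Dv (1,0) (Dv (1,0) Φ) q
      + (v.1*w.2 + v.2*w.1) * Dv (1,0) (Dv (0,1) Φ) q
      + (v.2*w.2) * Dv (0,1) (Dv (0,1) Φ) q := funext (fun q => D2_expand h v w q)
  rw [Dv_expand u, hvw,
    Dv_comb3 (Dv_smooth _ (Dv_smooth _ h)) (Dv_smooth _ (Dv_smooth _ h))
      (Dv_smooth _ (Dv_smooth _ h)),
    Dv_comb3 (Dv_smooth _ (Dv_smooth _ h)) (Dv_smooth _ (Dv_smooth _ h))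
      (Dv_smooth _ (Dv_smooth _ h)),
    ← Dv_symm (Dv_smooth (1,0) h) p, ← Dv_symm (Dv_smooth (0,1) h) p, s1]
  ring

lemma jets_id {Φ : ℝ × ℝ → ℝ} (h : ContDiff ℝ (⊤ : ℕ∞) Φ) :
    p11 (fun t x => Φ (t,x)) = (fun t x => Dv (1,0) (Dv (1,0) Φ) (t,x))
  ∧ p12 (fun t x => Φ (t,x)) = (fun t x => Dv (1,0) (Dv (0,1) Φ) (t,x))
  ∧ p22 (fun t x => Φ (t,x)) = (fun t x => Dv (0,1) (Dv (0,1) Φ) (t,x))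
  ∧ p111 (fun t x => Φ (t,x)) = (fun t x => Dv (1,0) (Dv (1,0) (Dv (1,0) Φ)) (t,x))
  ∧ p112 (fun t x => Φ (t,x)) = (fun t x => Dv (1,0) (Dv (1,0) (Dv (0,1) Φ)) (t,x))
  ∧ p122 (fun t x => Φ (t,x)) = (fun t x => Dv (1,0) (Dv (0,1) (Dv (0,1) Φ)) (t,x))
  ∧ p222 (fun t x => Φ (t,x)) = (fun t x => Dv (0,1) (Dv (0,1) (Dv (0,1) Φ)) (t,x)) := by
  have h11 : p11 (fun t x => Φ (t,x)) = (fun t x => Dv (1,0) (Dv (1,0) Φ) (t,x)) := by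
    simp only [p11]; rw [pd1_id h, pd1_id (Dv_smooth _ h)]
  have h12 : p12 (fun t x => Φ (t,x)) = (fun t x => Dv (1,0) (Dv (0,1) Φ) (t,x)) := by
    simp only [p12]; rw [pd2_id h, pd1_id (Dv_smooth _ h)]
  have h22 : p22 (fun t x => Φ (t,x)) = (fun t x => Dv (0,1) (Dv (0,1) Φ) (t,x)) := by
    simp only [p22]; rw [pd2_id h, pd2_id (Dv_smooth _ h)]
  refine ⟨h11, h12, h22, ?_, ?_, ?_, ?_⟩
  · simp only [p111]; rw [h11, pd1_id (Dv_smooth _ (Dv_smooth _ h))]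
  · simp only [p112]; rw [h12, pd1_id (Dv_smooth _ (Dv_smooth _ h))]
  · simp only [p122]; rw [h22, pd1_id (Dv_smooth _ (Dv_smooth _ h))]
  · simp only [p222]; rw [h22, pd2_id (Dv_smooth _ (Dv_smooth _ h))]

lemma jets_comp {Φ : ℝ × ℝ → ℝ} (h : ContDiff ℝ (⊤ : ℕ∞) Φ) (a b c d e f : ℝ) :
    p11 (fun t x => Φ (a*t+b*x+c, d*t+e*x+f))
      = (fun t x => Dv (a,d) (Dv (a,d) Φ) (a*t+b*x+c, d*t+e*x+f))
  ∧ p12 (fun t x => Φ (a*t+b*x+c, d*t+e*x+f))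
      = (fun t x => Dv (a,d) (Dv (b,e) Φ) (a*t+b*x+c, d*t+e*x+f))
  ∧ p22 (fun t x => Φ (a*t+b*x+c, d*t+e*x+f))
      = (fun t x => Dv (b,e) (Dv (b,e) Φ) (a*t+b*x+c, d*t+e*x+f))
  ∧ p111 (fun t x => Φ (a*t+b*x+c, d*t+e*x+f))
      = (fun t x => Dv (a,d) (Dv (a,d) (Dv (a,d) Φ)) (a*t+b*x+c, d*t+e*x+f))
  ∧ p112 (fun t x => Φ (a*t+b*x+c, d*t+e*x+f))
      = (fun t x => Dv (a,d) (Dv (a,d) (Dv (b,e) Φ)) (a*t+b*x+c, d*t+e*x+f))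
  ∧ p122 (fun t x => Φ (a*t+b*x+c, d*t+e*x+f))
      = (fun t x => Dv (a,d) (Dv (b,e) (Dv (b,e) Φ)) (a*t+b*x+c, d*t+e*x+f))
  ∧ p222 (fun t x => Φ (a*t+b*x+c, d*t+e*x+f))
      = (fun t x => Dv (b,e) (Dv (b,e) (Dv (b,e) Φ)) (a*t+b*x+c, d*t+e*x+f)) := by
  have h11 : p11 (fun t x => Φ (a*t+b*x+c, d*t+e*x+f))
      = (fun t x => Dv (a,d) (Dv (a,d) Φ) (a*t+b*x+c, d*t+e*x+f)) := by
    simp only [p11]; rw [pd1_comp h, pd1_comp (Dv_smooth _ h)]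
  have h12 : p12 (fun t x => Φ (a*t+b*x+c, d*t+e*x+f))
      = (fun t x => Dv (a,d) (Dv (b,e) Φ) (a*t+b*x+c, d*t+e*x+f)) := by
    simp only [p12]; rw [pd2_comp h, pd1_comp (Dv_smooth _ h)]
  have h22 : p22 (fun t x => Φ (a*t+b*x+c, d*t+e*x+f))
      = (fun t x => Dv (b,e) (Dv (b,e) Φ) (a*t+b*x+c, d*t+e*x+f)) := by
    simp only [p22]; rw [pd2_comp h, pd2_comp (Dv_smooth _ h)]
  refine ⟨h11, h12, h22, ?_, ?_, ?_, ?_⟩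
  · simp only [p111]; rw [h11, pd1_comp (Dv_smooth _ (Dv_smooth _ h))]
  · simp only [p112]; rw [h12, pd1_comp (Dv_smooth _ (Dv_smooth _ h))]
  · simp only [p122]; rw [h22, pd1_comp (Dv_smooth _ (Dv_smooth _ h))]
  · simp only [p222]; rw [h22, pd2_comp (Dv_smooth _ (Dv_smooth _ h))]

lemma master {Φ : ℝ × ℝ → ℝ} (h : ContDiff ℝ (⊤ : ℕ∞) Φ) (lam : ℝ)
    (hsol : IsSol lam (fun t x => Φ (t,x))) (a b c d e f : ℝ) :
    IsSol lam (fun t x => Φ (a*t+b*x+c, d*t+e*x+f)) := by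
  obtain ⟨g11, g12, g22, g111, g112, g122, g222⟩ := jets_comp h a b c d e f
  obtain ⟨i11, i12, i22, i111, i112, i122, i222⟩ := jets_id h
  intro t x
  have hs := hsol (a*t+b*x+c) (d*t+e*x+f)
  simp only [Rnum, detg, i11, i12, i22, i111, i112, i122, i222] at hs
  simp only [Rnum, detg, g11, g12, g22, g111, g112, g122, g222]
  rw [D2_expand h (a,d) (a,d), D2_expand h (a,d) (b,e), D2_expand h (b,e) (b,e),
    D3_expand h (a,d) (a,d) (a,d), D3_expand h (a,d) (a,d) (b,e),
    D3_expand h (a,d) (b,e) (b,e), D3_expand h (b,e) (b,e) (b,e)]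
  simp only
  linear_combination (a*e - b*d)^4 * hs

lemma master_add {Φ Φ' : ℝ × ℝ → ℝ} (h : ContDiff ℝ (⊤ : ℕ∞) Φ) (lam α β γ : ℝ)
    (hΦ' : Φ' = fun p : ℝ × ℝ => Φ p + (α*p.1+β*p.2+γ))
    (hsol : IsSol lam (fun t x => Φ (t,x))) :
    IsSol lam (fun t x => Φ' (t,x)) := by
  have hsm : ContDiff ℝ (⊤ : ℕ∞) Φ' := by
    rw [hΦ']; exact h.add (by fun_prop)
  have key : ∀ v : ℝ × ℝ, Dv v Φ' = fun q => Dv v Φ q + (α*v.1+β*v.2) := by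
    intro v; funext q
    have h1 : HasFDerivAt (fun p : ℝ × ℝ => α*p.1+β*p.2+γ)
        (α • ContinuousLinearMap.fst ℝ ℝ ℝ + β • ContinuousLinearMap.snd ℝ ℝ ℝ) q := by
      apply HasFDerivAt.add_const
      exact (((ContinuousLinearMap.fst ℝ ℝ ℝ).hasFDerivAt).const_mul α).add
        (((ContinuousLinearMap.snd ℝ ℝ ℝ).hasFDerivAt).const_mul β)
    have h2 : fderiv ℝ (fun p : ℝ × ℝ => Φ p + (α*p.1+β*p.2+γ)) q = _ := (((h.differentiable (by simp) q).hasFDerivAt).add h1).fderiv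
    show fderiv ℝ Φ' q v = _
    rw [hΦ', h2]
    simp [Dv]
  have key2 : ∀ v w : ℝ × ℝ, Dv w (Dv v Φ') = Dv w (Dv v Φ) := by
    intro v w; funext q
    rw [key v]
    show fderiv ℝ (fun q => Dv v Φ q + (α*v.1+β*v.2)) q w = _
    rw [fderiv_add_const]; rfl
  have key3 : ∀ u v w : ℝ × ℝ, Dv w (Dv v (Dv u Φ')) = Dv w (Dv v (Dv u Φ)) := by
    intro u v w; rw [key2 u v]
  obtain ⟨a11, a12, a22, a111, a112, a122, a222⟩ := jets_id hsm
  obtain ⟨i11, i12, i22, i111, i112, i122, i222⟩ := jets_id h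
  intro t x
  have hs := hsol t x
  simp only [Rnum, detg, i11, i12, i22, i111, i112, i122, i222] at hs
  simp only [Rnum, detg, a11, a12, a22, a111, a112, a122, a222,
    key2, key3]
  exact hs

/-- Each of the nine vector fields `X₁ = ∂_t, …, X₉ = x∂_ψ` generates a one-parameter
group of point transformations mapping (smooth) solutions of the curvature PDE to
solutions: translations in `t`, `x`, `ψ`, scalings of `t` and `x`, the two shears
`(t,x) ↦ (t+εx, x)` and `(t,x) ↦ (t, x+εt)`, and the shifts `ψ ↦ ψ + εt`, `ψ ↦ ψ + εx`. -/
theorem nine_point_symmetries (lam ε : ℝ) (ψ : ℝ → ℝ → ℝ)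
    (hψ : ContDiff ℝ (⊤ : ℕ∞) fun p : ℝ × ℝ => ψ p.1 p.2) (hsol : IsSol lam ψ) :
    IsSol lam (fun t x => ψ (t + ε) x) ∧
    IsSol lam (fun t x => ψ t (x + ε)) ∧
    IsSol lam (fun t x => ψ t x + ε) ∧
    IsSol lam (fun t x => ψ (Real.exp ε * t) x) ∧
    IsSol lam (fun t x => ψ t (Real.exp ε * x)) ∧
    IsSol lam (fun t x => ψ (t + ε * x) x) ∧
    IsSol lam (fun t x => ψ t (x + ε * t)) ∧
    IsSol lam (fun t x => ψ t x + ε * t) ∧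
    IsSol lam (fun t x => ψ t x + ε * x) := by
  refine ⟨?_, ?_, ?_, ?_, ?_, ?_, ?_, ?_, ?_⟩
  · rw [show (fun t x : ℝ => ψ (t + ε) x)
        = (fun t x : ℝ => (fun p : ℝ × ℝ => ψ p.1 p.2) (1*t+0*x+ε, 0*t+1*x+0)) from by
      funext t x; show _ = ψ _ _; rw [show (1:ℝ)*t+0*x+ε = t+ε by ring, show (0:ℝ)*t+1*x+0 = x by ring]]
    exact master hψ lam hsol 1 0 ε 0 1 0
  · rw [show (fun t x : ℝ => ψ t (x + ε))
        = (fun t x : ℝ => (fun p : ℝ × ℝ => ψ p.1 p.2) (1*t+0*x+0, 0*t+1*x+ε)) from by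
      funext t x; show _ = ψ _ _; rw [show (1:ℝ)*t+0*x+0 = t by ring, show (0:ℝ)*t+1*x+ε = x+ε by ring]]
    exact master hψ lam hsol 1 0 0 0 1 ε
  · rw [show (fun t x : ℝ => ψ t x + ε)
        = (fun t x : ℝ => (fun p : ℝ × ℝ => ψ p.1 p.2 + (0*p.1+0*p.2+ε)) (t,x)) from by
      funext t x; show _ = ψ _ _ + _; rw [show (0:ℝ)*t+0*x+ε = ε by ring]]
    exact master_add (Φ' := fun p : ℝ × ℝ => ψ p.1 p.2 + (0*p.1+0*p.2+ε)) hψ lam 0 0 ε rfl hsol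
  · rw [show (fun t x : ℝ => ψ (Real.exp ε * t) x)
        = (fun t x : ℝ => (fun p : ℝ × ℝ => ψ p.1 p.2) ((Real.exp ε)*t+0*x+0, 0*t+1*x+0)) from by
      funext t x; show _ = ψ _ _; rw [show (Real.exp ε)*t+0*x+0 = Real.exp ε * t by ring, show (0:ℝ)*t+1*x+0 = x by ring]]
    exact master hψ lam hsol (Real.exp ε) 0 0 0 1 0
  · rw [show (fun t x : ℝ => ψ t (Real.exp ε * x))
        = (fun t x : ℝ => (fun p : ℝ × ℝ => ψ p.1 p.2) (1*t+0*x+0, 0*t+(Real.exp ε)*x+0)) from by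
      funext t x; show _ = ψ _ _; rw [show (1:ℝ)*t+0*x+0 = t by ring, show (0:ℝ)*t+(Real.exp ε)*x+0 = Real.exp ε * x by ring]]
    exact master hψ lam hsol 1 0 0 0 (Real.exp ε) 0
  · rw [show (fun t x : ℝ => ψ (t + ε * x) x)
        = (fun t x : ℝ => (fun p : ℝ × ℝ => ψ p.1 p.2) (1*t+ε*x+0, 0*t+1*x+0)) from by
      funext t x; show _ = ψ _ _; rw [show (1:ℝ)*t+ε*x+0 = t+ε*x by ring, show (0:ℝ)*t+1*x+0 = x by ring]]
    exact master hψ lam hsol 1 ε 0 0 1 0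
  · rw [show (fun t x : ℝ => ψ t (x + ε * t))
        = (fun t x : ℝ => (fun p : ℝ × ℝ => ψ p.1 p.2) (1*t+0*x+0, ε*t+1*x+0)) from by
      funext t x; show _ = ψ _ _; rw [show (1:ℝ)*t+0*x+0 = t by ring, show ε*t+1*x+0 = x+ε*t by ring]]
    exact master hψ lam hsol 1 0 0 ε 1 0
  · rw [show (fun t x : ℝ => ψ t x + ε * t)
        = (fun t x : ℝ => (fun p : ℝ × ℝ => ψ p.1 p.2 + (ε*p.1+0*p.2+0)) (t,x)) from by
      funext t x; show _ = ψ _ _ + _; rw [show ε*t+0*x+0 = ε*t by ring]]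
    exact master_add (Φ' := fun p : ℝ × ℝ => ψ p.1 p.2 + (ε*p.1+0*p.2+0)) hψ lam ε 0 0 rfl hsol
  · rw [show (fun t x : ℝ => ψ t x + ε * x)
        = (fun t x : ℝ => (fun p : ℝ × ℝ => ψ p.1 p.2 + (0*p.1+ε*p.2+0)) (t,x)) from by
      funext t x; show _ = ψ _ _ + _; rw [show (0:ℝ)*t+ε*x+0 = ε*x by ring]]
    exact master_add (Φ' := fun p : ℝ × ℝ => ψ p.1 p.2 + (0*p.1+ε*p.2+0)) hψ lam 0 ε 0 rfl hsol
end

section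
/- For λ ≠ 0 and constants c₁, c₂, a ≠ 0, c₃, the function ψ(θ¹,θ²) = -(1/(4λ)) ln{c₂ exp(c₁θ² - c₁ a ln θ¹) - 1} + c₃ satisfies the constant-curvature equation ψ₁₁(ψ₁₁₂ψ₂₂₂ - ψ₁₂₂²) - ψ₁₂(ψ₁₁₁ψ₂₂₂ - ψ₁₁₂ψ₁₂₂) + ψ₂₂(ψ₁₁₁ψ₁₂₂ - ψ₁₁₂²) = 4λ(ψ₁₁ψ₂₂ - ψ₁₂²)² on any open set where θ¹ > 0 and c₂ exp(c₁θ² - c₁ a ln θ¹) > 1. -/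
open Real

/-! `ψ` depends on `(θ¹, θ²)` only through `ξ = c₁θ² - c₁a ln θ¹`, an invariant of the flow of
`X₄ + aX₂ = θ¹∂₁ + a∂₂`: `ψ = h(ξ)` with `h(v) = k ln(c₂eᵛ - 1) + c₃`, `k = -1/(4λ)`.
For any lift `h(bx - m ln t)`, every partial derivative of order `≤ 3` is a combination of
`h', h'', h'''` at `ξ` divided by a power of `t`, and the curvature equation collapses to
`Rnum - 4λ det² = m²b⁴t⁻⁴ (h''(h'h''' - h''²) - 4λ(h'h'')²)`, an ODE for `h`.
With `E = c₂eᵛ` one has `h' = kE/(E-1)`, `h'' = -kE/(E-1)²`, `h''' = kE(E+1)/(E-1)³`,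
so the ODE reduces to `k³ = -4λk⁴`, i.e. `4λk = -1`. -/

open Filter Topology

noncomputable section InvariantLift

variable {b m : ℝ} {U : Set ℝ} {h h1 h2 h3 : ℝ → ℝ} {t x : ℝ}

def logInvariant (b m t x : ℝ) : ℝ := b * x - m * log t

def invariantLift (b m : ℝ) (h : ℝ → ℝ) (t x : ℝ) : ℝ := h (logInvariant b m t x)

def invariantDomain (b m : ℝ) (U : Set ℝ) : Set (ℝ × ℝ) :=
  {p | 0 < p.1 ∧ logInvariant b m p.1 p.2 ∈ U}

theorem isOpen_invariantDomain (hU : IsOpen U) : IsOpen (invariantDomain b m U) := by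
  have hcont : ContinuousOn (fun p : ℝ × ℝ => logInvariant b m p.1 p.2) {p | 0 < p.1} :=
    (continuous_const.mul continuous_snd).continuousOn.sub
      (continuousOn_const.mul (continuousOn_log.comp continuous_fst.continuousOn
        fun p hp => ne_of_gt hp))
  exact hcont.isOpen_inter_preimage (isOpen_lt continuous_const continuous_fst) hU

theorem hasDerivAt_div_pow_logInvariant_fst {g g' : ℝ → ℝ} (n : ℕ) (ht : 0 < t)
    (hg : HasDerivAt g (g' (logInvariant b m t x)) (logInvariant b m t x)) :
    HasDerivAt (fun s => g (logInvariant b m s x) / s ^ n)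
      (-(m * g' (logInvariant b m t x) + n * g (logInvariant b m t x)) / t ^ (n + 1)) t := by
  have hξ : HasDerivAt (fun s => logInvariant b m s x) (-(m / t)) t := by
    simpa [logInvariant, div_eq_mul_inv] using
      ((hasDerivAt_log ht.ne').const_mul m).const_sub (b * x)
  refine ((hg.comp t hξ).div (hasDerivAt_pow n t) (pow_ne_zero n ht.ne')).congr_deriv ?_
  cases n with
  | zero => field_simp; ring
  | succ n => simp only [Nat.add_sub_cancel, Function.comp_apply]; field_simp; ring

theorem hasDerivAt_div_pow_logInvariant_snd {g g' : ℝ → ℝ} (n : ℕ) (t : ℝ)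
    (hg : HasDerivAt g (g' (logInvariant b m t x)) (logInvariant b m t x)) :
    HasDerivAt (fun y => g (logInvariant b m t y) / t ^ n)
      (b * g' (logInvariant b m t x) / t ^ n) x := by
  have hξ : HasDerivAt (fun y => logInvariant b m t y) b x := by
    simpa [logInvariant] using ((hasDerivAt_id x).const_mul b).sub_const (m * log t)
  refine ((hg.comp x hξ).div_const (t ^ n)).congr_deriv ?_
  ring

theorem pd1_eq_div_pow_of_eqOn_invariantDomain (hU : IsOpen U) {f : ℝ → ℝ → ℝ}
    {g g' G : ℝ → ℝ} {n : ℕ}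
    (hf : ∀ t x, (t, x) ∈ invariantDomain b m U → f t x = g (logInvariant b m t x) / t ^ n)
    (hg : ∀ v ∈ U, HasDerivAt g (g' v) v) (hG : ∀ v, -(m * g' v + n * g v) = G v) :
    ∀ t x, (t, x) ∈ invariantDomain b m U →
      pd1 f t x = G (logInvariant b m t x) / t ^ (n + 1) := by
  intro t x hp
  have hslice : ∀ᶠ s in 𝓝 t, (s, x) ∈ invariantDomain b m U :=
    (continuous_id.prodMk continuous_const).continuousAt.preimage_mem_nhds
      ((isOpen_invariantDomain hU).mem_nhds hp)
  have hev : (fun s => f s x) =ᶠ[𝓝 t] fun s => g (logInvariant b m s x) / s ^ n :=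
    hslice.mono fun s hs => hf s x hs
  show deriv (fun s => f s x) t = _
  rw [hev.deriv_eq, (hasDerivAt_div_pow_logInvariant_fst n hp.1 (hg _ hp.2)).deriv, hG]

theorem pd2_eq_div_pow_of_eqOn_invariantDomain (hU : IsOpen U) {f : ℝ → ℝ → ℝ}
    {g g' G : ℝ → ℝ} {n : ℕ}
    (hf : ∀ t x, (t, x) ∈ invariantDomain b m U → f t x = g (logInvariant b m t x) / t ^ n)
    (hg : ∀ v ∈ U, HasDerivAt g (g' v) v) (hG : ∀ v, b * g' v = G v) :
    ∀ t x, (t, x) ∈ invariantDomain b m U →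
      pd2 f t x = G (logInvariant b m t x) / t ^ n := by
  intro t x hp
  have hslice : ∀ᶠ y in 𝓝 x, (t, y) ∈ invariantDomain b m U :=
    (continuous_const.prodMk continuous_id).continuousAt.preimage_mem_nhds
      ((isOpen_invariantDomain hU).mem_nhds hp)
  have hev : (fun y => f t y) =ᶠ[𝓝 x] fun y => g (logInvariant b m t y) / t ^ n :=
    hslice.mono fun y hy => hf t y hy
  show deriv (fun y => f t y) x = _
  rw [hev.deriv_eq, (hasDerivAt_div_pow_logInvariant_snd n t (hg _ hp.2)).deriv, hG]

-- The powers `t ^ 0`, `t ^ 1` keep every formula in the shape `g (logInvariant b m t x) / t ^ n`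
-- that the two lemmas above differentiate.
theorem invariantLift_second_partials (hU : IsOpen U) (hh : ∀ v ∈ U, HasDerivAt h (h1 v) v)
    (hh1 : ∀ v ∈ U, HasDerivAt h1 (h2 v) v) :
    ∀ t x, (t, x) ∈ invariantDomain b m U →
      p11 (invariantLift b m h) t x =
          (m ^ 2 * h2 (logInvariant b m t x) + m * h1 (logInvariant b m t x)) / t ^ 2 ∧
        p12 (invariantLift b m h) t x = -(m * b) * h2 (logInvariant b m t x) / t ^ 1 ∧
        p22 (invariantLift b m h) t x = b ^ 2 * h2 (logInvariant b m t x) / t ^ 0 := by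
  have dh1 (c : ℝ) : ∀ v ∈ U, HasDerivAt (fun w => c * h1 w) (c * h2 v) v :=
    fun v hv => (hh1 v hv).const_mul c
  have d0 : ∀ t x, (t, x) ∈ invariantDomain b m U →
      invariantLift b m h t x = h (logInvariant b m t x) / t ^ 0 := by
    simp [invariantLift]
  have d1 := pd1_eq_div_pow_of_eqOn_invariantDomain hU d0 hh (G := fun v => -m * h1 v)
    (fun v => by simp)
  have d2 := pd2_eq_div_pow_of_eqOn_invariantDomain hU d0 hh (G := fun v => b * h1 v)
    (fun v => rfl)
  intro t x hp
  refine ⟨?_, ?_, ?_⟩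
  · exact pd1_eq_div_pow_of_eqOn_invariantDomain hU d1 (dh1 (-m))
      (G := fun v => m ^ 2 * h2 v + m * h1 v) (fun v => by push_cast; ring) t x hp
  · exact pd1_eq_div_pow_of_eqOn_invariantDomain hU d2 (dh1 b)
      (G := fun v => -(m * b) * h2 v) (fun v => by push_cast; ring) t x hp
  · exact pd2_eq_div_pow_of_eqOn_invariantDomain hU d2 (dh1 b)
      (G := fun v => b ^ 2 * h2 v) (fun v => by ring) t x hp

theorem invariantLift_third_partials (hU : IsOpen U) (hh : ∀ v ∈ U, HasDerivAt h (h1 v) v)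
    (hh1 : ∀ v ∈ U, HasDerivAt h1 (h2 v) v) (hh2 : ∀ v ∈ U, HasDerivAt h2 (h3 v) v)
    (hp : (t, x) ∈ invariantDomain b m U) :
    p111 (invariantLift b m h) t x = -(m ^ 3 * h3 (logInvariant b m t x)
        + 3 * m ^ 2 * h2 (logInvariant b m t x) + 2 * m * h1 (logInvariant b m t x)) / t ^ 3 ∧
      p112 (invariantLift b m h) t x =
        (m ^ 2 * b * h3 (logInvariant b m t x) + m * b * h2 (logInvariant b m t x)) / t ^ 2 ∧
      p122 (invariantLift b m h) t x = -(m * b ^ 2 * h3 (logInvariant b m t x)) / t ^ 1 ∧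
      p222 (invariantLift b m h) t x = b ^ 3 * h3 (logInvariant b m t x) / t ^ 0 := by
  have second := invariantLift_second_partials (b := b) (m := m) hU hh hh1
  have dh2 (c : ℝ) : ∀ v ∈ U, HasDerivAt (fun w => c * h2 w) (c * h3 v) v :=
    fun v hv => (hh2 v hv).const_mul c
  refine ⟨?_, ?_, ?_, ?_⟩
  · exact pd1_eq_div_pow_of_eqOn_invariantDomain hU (fun t x hp => (second t x hp).1)
      (g := fun v => m ^ 2 * h2 v + m * h1 v)
      (fun v hv => (dh2 (m ^ 2) v hv).add ((hh1 v hv).const_mul m))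
      (G := fun v => -(m ^ 3 * h3 v + 3 * m ^ 2 * h2 v + 2 * m * h1 v))
      (fun v => by push_cast; ring) t x hp
  · exact pd1_eq_div_pow_of_eqOn_invariantDomain hU (fun t x hp => (second t x hp).2.1)
      (dh2 (-(m * b))) (G := fun v => m ^ 2 * b * h3 v + m * b * h2 v)
      (fun v => by push_cast; ring) t x hp
  · exact pd1_eq_div_pow_of_eqOn_invariantDomain hU (fun t x hp => (second t x hp).2.2)
      (dh2 (b ^ 2)) (G := fun v => -(m * b ^ 2 * h3 v)) (fun v => by push_cast; ring) t x hp
  · exact pd2_eq_div_pow_of_eqOn_invariantDomain hU (fun t x hp => (second t x hp).2.2)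
      (dh2 (b ^ 2)) (G := fun v => b ^ 3 * h3 v) (fun v => by ring) t x hp

theorem detg_invariantLift (hU : IsOpen U) (hh : ∀ v ∈ U, HasDerivAt h (h1 v) v)
    (hh1 : ∀ v ∈ U, HasDerivAt h1 (h2 v) v) (hp : (t, x) ∈ invariantDomain b m U) :
    detg (invariantLift b m h) t x =
      m * b ^ 2 * h1 (logInvariant b m t x) * h2 (logInvariant b m t x) / t ^ 2 := by
  obtain ⟨d11, d12, d22⟩ := invariantLift_second_partials hU hh hh1 t x hp
  have ht : t ≠ 0 := hp.1.ne'
  rw [detg, d11, d12, d22]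
  field_simp
  ring

theorem Rnum_invariantLift (hU : IsOpen U) (hh : ∀ v ∈ U, HasDerivAt h (h1 v) v)
    (hh1 : ∀ v ∈ U, HasDerivAt h1 (h2 v) v) (hh2 : ∀ v ∈ U, HasDerivAt h2 (h3 v) v)
    (hp : (t, x) ∈ invariantDomain b m U) :
    Rnum (invariantLift b m h) t x = m ^ 2 * b ^ 4 * h2 (logInvariant b m t x) *
      (h1 (logInvariant b m t x) * h3 (logInvariant b m t x) - h2 (logInvariant b m t x) ^ 2)
        / t ^ 4 := by
  obtain ⟨d11, d12, d22⟩ := invariantLift_second_partials hU hh hh1 t x hp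
  obtain ⟨d111, d112, d122, d222⟩ := invariantLift_third_partials hU hh hh1 hh2 hp
  have ht : t ≠ 0 := hp.1.ne'
  rw [Rnum, d11, d12, d22, d111, d112, d122, d222]
  field_simp
  ring

theorem Rnum_eq_of_reducedEq_invariantLift (lam : ℝ) (hU : IsOpen U)
    (hh : ∀ v ∈ U, HasDerivAt h (h1 v) v) (hh1 : ∀ v ∈ U, HasDerivAt h1 (h2 v) v)
    (hh2 : ∀ v ∈ U, HasDerivAt h2 (h3 v) v) (hp : (t, x) ∈ invariantDomain b m U)
    (hred : h2 (logInvariant b m t x) * (h1 (logInvariant b m t x) * h3 (logInvariant b m t x)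
      - h2 (logInvariant b m t x) ^ 2) =
        4 * lam * (h1 (logInvariant b m t x) * h2 (logInvariant b m t x)) ^ 2) :
    Rnum (invariantLift b m h) t x = 4 * lam * detg (invariantLift b m h) t x ^ 2 := by
  rw [Rnum_invariantLift hU hh hh1 hh2 hp, detg_invariantLift hU hh hh1 hp, mul_assoc _ (h2 _),
    hred]
  ring

end InvariantLift

noncomputable section LogPotential

def logPotential (k c2 c3 v : ℝ) : ℝ := k * log (c2 * exp v - 1) + c3

variable {k c2 : ℝ} {v : ℝ}

theorem hasDerivAt_logPotential (c3 : ℝ) (hv : 1 < c2 * exp v) :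
    HasDerivAt (logPotential k c2 c3) (k * (c2 * exp v) / (c2 * exp v - 1)) v := by
  have hE : c2 * exp v - 1 ≠ 0 := by linarith
  have hexp : HasDerivAt (fun w => c2 * exp w) (c2 * exp v) v := (hasDerivAt_exp v).const_mul c2
  refine (((hexp.sub_const 1).log hE).const_mul k |>.add_const c3).congr_deriv ?_
  ring

theorem hasDerivAt_logPotential_deriv (hv : 1 < c2 * exp v) :
    HasDerivAt (fun w => k * (c2 * exp w) / (c2 * exp w - 1))
      (-(k * (c2 * exp v)) / (c2 * exp v - 1) ^ 2) v := by
  have hE : c2 * exp v - 1 ≠ 0 := by linarith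
  have hexp : HasDerivAt (fun w => c2 * exp w) (c2 * exp v) v := (hasDerivAt_exp v).const_mul c2
  refine ((hexp.const_mul k).div (hexp.sub_const 1) hE).congr_deriv ?_
  field_simp
  ring

theorem hasDerivAt_logPotential_deriv2 (hv : 1 < c2 * exp v) :
    HasDerivAt (fun w => -(k * (c2 * exp w)) / (c2 * exp w - 1) ^ 2)
      (k * (c2 * exp v) * (c2 * exp v + 1) / (c2 * exp v - 1) ^ 3) v := by
  have hE : c2 * exp v - 1 ≠ 0 := by linarith
  have hexp : HasDerivAt (fun w => c2 * exp w) (c2 * exp v) v := (hasDerivAt_exp v).const_mul c2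
  refine ((hexp.const_mul k).neg.div
    ((hexp.sub_const 1).pow 2) (pow_ne_zero 2 hE)).congr_deriv ?_
  simp only [Pi.neg_apply, Pi.pow_apply]
  field_simp
  ring

-- For `λ ≠ 0` this is `4λk = -1` with `k = -1/(4λ)`; for `λ = 0`, Lean's `1 / 0 = 0` makes `k = 0`.
theorem four_mul_mul_neg_one_div_four_mul_pow_four (lam : ℝ) :
    4 * lam * (-(1 / (4 * lam))) ^ 4 = -(-(1 / (4 * lam))) ^ 3 := by
  rcases eq_or_ne lam 0 with rfl | hlam
  · simp
  · field_simp

theorem logPotential_derivs_reducedEq {lam k E : ℝ} (hk : 4 * lam * k ^ 4 = -k ^ 3)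
    (hE : E ≠ 1) :
    -(k * E) / (E - 1) ^ 2 * (k * E / (E - 1) * (k * E * (E + 1) / (E - 1) ^ 3)
      - (-(k * E) / (E - 1) ^ 2) ^ 2) =
        4 * lam * (k * E / (E - 1) * (-(k * E) / (E - 1) ^ 2)) ^ 2 := by
  have hE' : E - 1 ≠ 0 := sub_ne_zero.mpr hE
  field_simp
  linear_combination -E ^ 4 * hk

end LogPotential

theorem invariant_solution_X4aX2_general (lam : ℝ) (c1 c2 c3 a : ℝ) :
    let ψ : ℝ → ℝ → ℝ := fun θ1 θ2 =>
      -(1 / (4 * lam)) * Real.log (c2 * Real.exp (c1 * θ2 - c1 * a * Real.log θ1) - 1) + c3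
    ∀ θ1 θ2, 0 < θ1 → 1 < c2 * Real.exp (c1 * θ2 - c1 * a * Real.log θ1) →
      Rnum ψ θ1 θ2 = 4 * lam * (detg ψ θ1 θ2) ^ 2 := by
  intro ψ θ1 θ2 hθ1 hE
  have hU : IsOpen {v | 1 < c2 * exp v} :=
    isOpen_lt continuous_const (continuous_const.mul continuous_exp)
  exact Rnum_eq_of_reducedEq_invariantLift (b := c1) (m := c1 * a) lam hU
    (fun v hv => hasDerivAt_logPotential c3 hv) (fun v hv => hasDerivAt_logPotential_deriv hv)
    (fun v hv => hasDerivAt_logPotential_deriv2 hv) ⟨hθ1, hE⟩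
    (logPotential_derivs_reducedEq (four_mul_mul_neg_one_div_four_mul_pow_four lam) hE.ne')

/-- The group-invariant solution from `X₄ + aX₂`: for `λ ≠ 0`,
`ψ(θ¹,θ²) = -(1/(4λ)) ln{c₂ exp(c₁θ² - c₁a ln θ¹) - 1} + c₃` satisfies the
constant-curvature equation on any open set where `θ¹ > 0` and
`c₂ exp(c₁θ² - c₁a ln θ¹) > 1`. -/
theorem invariant_solution_X4aX2 (lam : ℝ) (hlam : lam ≠ 0) (c1 c2 c3 a : ℝ) (ha : a ≠ 0) :
    let ψ : ℝ → ℝ → ℝ := fun θ1 θ2 =>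
      -(1 / (4 * lam)) * Real.log (c2 * Real.exp (c1 * θ2 - c1 * a * Real.log θ1) - 1) + c3
    ∀ θ1 θ2, 0 < θ1 → 1 < c2 * Real.exp (c1 * θ2 - c1 * a * Real.log θ1) →
      Rnum ψ θ1 θ2 = 4 * lam * (detg ψ θ1 θ2) ^ 2 :=
  invariant_solution_X4aX2_general lam c1 c2 c3 a
end

section
/- For λ ≠ 0 and constants c₁ ≠ 0, a ≠ 0, c₂, c₃, the function ψ(θ¹,θ²) = [(θ² - c₁)ln(θ² - c₁) - θ² ln θ²]/(4c₁λ) + (θ¹)²/(2aθ²) + c₂θ² + c₃ satisfies the constant-curvature equation ψ₁₁(ψ₁₁₂ψ₂₂₂ - ψ₁₂₂²) - ψ₁₂(ψ₁₁₁ψ₂₂₂ - ψ₁₁₂ψ₁₂₂) + ψ₂₂(ψ₁₁₁ψ₁₂₂ - ψ₁₁₂²) = 4λ(ψ₁₁ψ₂₂ - ψ₁₂²)² on any open set where θ² > max(0, c₁). -/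
open Real

/-!
Write `ψ(t, x) = t² k(x) + h(x)` with `k(x) = 1 / (2 a x)`. All partial derivatives of such a
potential are again quadratic in `t`, so both sides of the curvature equation are polynomials in
`t`; for `k = c / x` their `t`-dependent parts cancel, leaving `det g = 2c h''/x` and
`Rnum = -4c² (x h''' + h'')/x⁴`. The equation thus says that `g = x h''` solves the Riccati
equation `g' = -4λ g²`, and for the given `h` one has `g = 1 / (4λ (x - c₁))`.
-/

def quadInFst (u v w : ℝ → ℝ) : ℝ → ℝ → ℝ := fun t x => t ^ 2 * u x + t * v x + w x

theorem pd1_quadInFst (u v w : ℝ → ℝ) :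
    pd1 (quadInFst u v w) = quadInFst 0 (fun x => 2 * u x) v := by
  funext t x
  have hd : HasDerivAt (fun s => s ^ 2 * u x + s * v x + w x) (2 * t * u x + v x) t :=
    ((((hasDerivAt_pow 2 t).mul_const (u x)).add
      ((hasDerivAt_id' t).mul_const (v x))).add_const (w x)).congr_deriv (by simp)
  simp only [pd1, quadInFst, hd.deriv, Pi.zero_apply]
  ring

theorem pd2_quadInFst {u v w u' v' w' : ℝ → ℝ} {x : ℝ} (hu : HasDerivAt u (u' x) x)
    (hv : HasDerivAt v (v' x) x) (hw : HasDerivAt w (w' x) x) (t : ℝ) :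
    pd2 (quadInFst u v w) t x = quadInFst u' v' w' t x :=
  (((hu.const_mul (t ^ 2)).add (hv.const_mul t)).add hw).deriv

section

variable {f g : ℝ → ℝ → ℝ} {U : Set ℝ}

theorem pd1_eq_of_eqOn (hfg : ∀ t, ∀ x ∈ U, f t x = g t x) :
    ∀ t, ∀ x ∈ U, pd1 f t x = pd1 g t x := by
  intro t x hx
  simp only [pd1, hfg _ x hx]

theorem pd2_eq_of_eqOn (hU : IsOpen U) (hfg : ∀ t, ∀ x ∈ U, f t x = g t x) :
    ∀ t, ∀ x ∈ U, pd2 f t x = pd2 g t x := fun t _ hx =>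
  Filter.EventuallyEq.deriv_eq (Filter.eventually_of_mem (hU.mem_nhds hx) (hfg t))

theorem pd1_eqOn_quadInFst {u v w : ℝ → ℝ} (hf : ∀ t, ∀ x ∈ U, f t x = quadInFst u v w t x) :
    ∀ t, ∀ x ∈ U, pd1 f t x = quadInFst 0 (fun x => 2 * u x) v t x := by
  intro t x hx
  rw [pd1_eq_of_eqOn hf t x hx, pd1_quadInFst]

theorem pd2_eqOn_quadInFst (hU : IsOpen U) {u w u' w' : ℝ → ℝ}
    (hu : ∀ x ∈ U, HasDerivAt u (u' x) x) (hw : ∀ x ∈ U, HasDerivAt w (w' x) x)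
    (hf : ∀ t, ∀ x ∈ U, f t x = quadInFst u 0 w t x) :
    ∀ t, ∀ x ∈ U, pd2 f t x = quadInFst u' 0 w' t x := by
  intro t x hx
  rw [pd2_eq_of_eqOn hU hf t x hx]
  exact pd2_quadInFst (hu x hx) (hasDerivAt_const x (0 : ℝ)) (hw x hx) t

end

section

variable {U : Set ℝ} {k k₁ k₂ k₃ h h₁ h₂ h₃ : ℝ → ℝ} {t x : ℝ}

theorem detg_quadInFst (hU : IsOpen U)
    (hk : ∀ y ∈ U, HasDerivAt k (k₁ y) y) (hk₁ : ∀ y ∈ U, HasDerivAt k₁ (k₂ y) y)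
    (hh : ∀ y ∈ U, HasDerivAt h (h₁ y) y) (hh₁ : ∀ y ∈ U, HasDerivAt h₁ (h₂ y) y)
    (hx : x ∈ U) :
    detg (quadInFst k 0 h) t x =
      2 * k x * h₂ x + 2 * t ^ 2 * (k x * k₂ x - 2 * k₁ x ^ 2) := by
  have e2 := pd2_eqOn_quadInFst hU hk hh fun _ _ _ => rfl
  have e12 := pd1_eqOn_quadInFst e2
  have e22 := pd2_eqOn_quadInFst hU hk₁ hh₁ e2
  simp only [detg, p11, p12, p22, pd1_quadInFst, e12 t x hx, e22 t x hx, quadInFst,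
    Pi.zero_apply]
  ring

theorem Rnum_quadInFst (hU : IsOpen U)
    (hk : ∀ y ∈ U, HasDerivAt k (k₁ y) y) (hk₁ : ∀ y ∈ U, HasDerivAt k₁ (k₂ y) y)
    (hk₂ : ∀ y ∈ U, HasDerivAt k₂ (k₃ y) y)
    (hh : ∀ y ∈ U, HasDerivAt h (h₁ y) y) (hh₁ : ∀ y ∈ U, HasDerivAt h₁ (h₂ y) y)
    (hh₂ : ∀ y ∈ U, HasDerivAt h₂ (h₃ y) y) (hx : x ∈ U) :
    Rnum (quadInFst k 0 h) t x =
      4 * (k x * k₁ x * h₃ x - k₁ x ^ 2 * h₂ x)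
        + 4 * t ^ 2 * (k x * k₁ x * k₃ x - 2 * k x * k₂ x ^ 2 + k₁ x ^ 2 * k₂ x) := by
  have e2 := pd2_eqOn_quadInFst hU hk hh fun _ _ _ => rfl
  have e12 := pd1_eqOn_quadInFst e2
  have e22 := pd2_eqOn_quadInFst hU hk₁ hh₁ e2
  have e112 := pd1_eqOn_quadInFst e12
  have e122 := pd1_eqOn_quadInFst e22
  have e222 := pd2_eqOn_quadInFst hU hk₂ hh₂ e22
  simp only [Rnum, p11, p12, p22, p111, p112, p122, p222, pd1_quadInFst, e12 t x hx, e22 t x hx,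
    e112 t x hx, e122 t x hx, e222 t x hx, quadInFst, Pi.zero_apply]
  ring

end

theorem hasDerivAt_const_div {x : ℝ} (c : ℝ) (hx : x ≠ 0) :
    HasDerivAt (fun y => c / y) (-c / x ^ 2) x :=
  ((hasDerivAt_const x c).div (hasDerivAt_id' x) hx).congr_deriv (by ring)

theorem hasDerivAt_const_div_pow {x : ℝ} (c : ℝ) (n : ℕ) (hx : x ≠ 0) :
    HasDerivAt (fun y => c / y ^ n) (-(n * c) / x ^ (n + 1)) x := by
  refine ((hasDerivAt_const x c).div (hasDerivAt_pow n x) (pow_ne_zero n hx)).congr_deriv ?_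
  rcases n with _ | n
  · simp
  · field_simp
    push_cast
    ring

section

variable {U : Set ℝ} {h h₁ h₂ h₃ : ℝ → ℝ} {c t x : ℝ}

theorem detg_quadInFst_const_div (hU : IsOpen U) (hU₀ : ∀ y ∈ U, y ≠ 0)
    (hh : ∀ y ∈ U, HasDerivAt h (h₁ y) y) (hh₁ : ∀ y ∈ U, HasDerivAt h₁ (h₂ y) y) (hx : x ∈ U) :
    detg (quadInFst (fun y => c / y) 0 h) t x = 2 * c * h₂ x / x := by
  have hk₁ : ∀ y ∈ U, HasDerivAt (fun y => -c / y ^ 2) (2 * c / y ^ 3) y := fun y hy =>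
    (hasDerivAt_const_div_pow _ 2 (hU₀ y hy)).congr_deriv (by push_cast; ring)
  rw [detg_quadInFst hU (fun y hy => hasDerivAt_const_div c (hU₀ y hy)) hk₁ hh hh₁ hx]
  have := hU₀ x hx
  field_simp
  ring

theorem Rnum_quadInFst_const_div (hU : IsOpen U) (hU₀ : ∀ y ∈ U, y ≠ 0)
    (hh : ∀ y ∈ U, HasDerivAt h (h₁ y) y) (hh₁ : ∀ y ∈ U, HasDerivAt h₁ (h₂ y) y)
    (hh₂ : ∀ y ∈ U, HasDerivAt h₂ (h₃ y) y) (hx : x ∈ U) :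
    Rnum (quadInFst (fun y => c / y) 0 h) t x = -4 * c ^ 2 * (x * h₃ x + h₂ x) / x ^ 4 := by
  have hk₁ : ∀ y ∈ U, HasDerivAt (fun y => -c / y ^ 2) (2 * c / y ^ 3) y := fun y hy =>
    (hasDerivAt_const_div_pow _ 2 (hU₀ y hy)).congr_deriv (by push_cast; ring)
  have hk₂ : ∀ y ∈ U, HasDerivAt (fun y => 2 * c / y ^ 3) (-6 * c / y ^ 4) y := fun y hy =>
    (hasDerivAt_const_div_pow _ 3 (hU₀ y hy)).congr_deriv (by push_cast; ring)
  rw [Rnum_quadInFst hU (fun y hy => hasDerivAt_const_div c (hU₀ y hy)) hk₁ hk₂ hh hh₁ hh₂ hx]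
  have := hU₀ x hx
  field_simp
  ring

end

section

variable {c x : ℝ}

theorem hasDerivAt_sub_mul_log_sub_sub_mul_log (hx : x ≠ 0) (hxc : x - c ≠ 0) :
    HasDerivAt (fun y => (y - c) * log (y - c) - y * log y) (log (x - c) - log x) x := by
  have hshift := (Real.hasDerivAt_mul_log hxc).comp x ((hasDerivAt_id' x).sub_const c)
  exact (hshift.sub (Real.hasDerivAt_mul_log hx)).congr_deriv (by ring)

theorem hasDerivAt_log_sub_sub_log (hx : x ≠ 0) (hxc : x - c ≠ 0) :
    HasDerivAt (fun y => log (y - c) - log y) ((x - c)⁻¹ - x⁻¹) x :=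
  (((hasDerivAt_id' x).sub_const c).log hxc).sub (Real.hasDerivAt_log hx) |>.congr_deriv
    (by simp [one_div])

theorem hasDerivAt_inv_sub_sub_inv (hx : x ≠ 0) (hxc : x - c ≠ 0) :
    HasDerivAt (fun y => (y - c)⁻¹ - y⁻¹) (-((x - c) ^ 2)⁻¹ + (x ^ 2)⁻¹) x :=
  (((hasDerivAt_id' x).sub_const c).inv hxc).sub (hasDerivAt_inv hx) |>.congr_deriv
    (by field_simp; ring)

end

theorem invariant_solution_X8aX6_general (lam : ℝ) (c1 a c2 c3 : ℝ)
    (hc1 : c1 ≠ 0) :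
    let ψ : ℝ → ℝ → ℝ := fun θ1 θ2 =>
      ((θ2 - c1) * Real.log (θ2 - c1) - θ2 * Real.log θ2) / (4 * c1 * lam)
        + θ1 ^ 2 / (2 * a * θ2) + c2 * θ2 + c3
    ∀ θ1 θ2, max 0 c1 < θ2 →
      Rnum ψ θ1 θ2 = 4 * lam * (detg ψ θ1 θ2) ^ 2 := by
  intro ψ θ1 θ2 hθ
  have hU : ∀ y ∈ Set.Ioi (max 0 c1), y ≠ 0 ∧ y - c1 ≠ 0 := fun y hy =>
    ⟨(max_lt_iff.1 hy).1.ne', sub_ne_zero.2 (max_lt_iff.1 hy).2.ne'⟩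
  have hh : ∀ y ∈ Set.Ioi (max 0 c1), HasDerivAt
      (fun y => ((y - c1) * log (y - c1) - y * log y) / (4 * c1 * lam) + c2 * y + c3)
      ((log (y - c1) - log y) / (4 * c1 * lam) + c2) y := fun y hy =>
    ((((hasDerivAt_sub_mul_log_sub_sub_mul_log (hU y hy).1 (hU y hy).2).div_const _).add
      ((hasDerivAt_id' y).const_mul c2)).add_const c3).congr_deriv (by ring)
  have hh₁ : ∀ y ∈ Set.Ioi (max 0 c1), HasDerivAt
      (fun y => (log (y - c1) - log y) / (4 * c1 * lam) + c2)
      (((y - c1)⁻¹ - y⁻¹) / (4 * c1 * lam)) y := fun y hy =>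
    ((hasDerivAt_log_sub_sub_log (hU y hy).1 (hU y hy).2).div_const _).add_const c2
  have hh₂ : ∀ y ∈ Set.Ioi (max 0 c1), HasDerivAt
      (fun y => ((y - c1)⁻¹ - y⁻¹) / (4 * c1 * lam))
      ((-((y - c1) ^ 2)⁻¹ + (y ^ 2)⁻¹) / (4 * c1 * lam)) y := fun y hy =>
    (hasDerivAt_inv_sub_sub_inv (hU y hy).1 (hU y hy).2).div_const _
  have hψ : ψ = quadInFst (fun y => (2 * a)⁻¹ / y) 0
      (fun y => ((y - c1) * log (y - c1) - y * log y) / (4 * c1 * lam) + c2 * y + c3) := by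
    funext t y
    simp only [ψ, quadInFst, Pi.zero_apply]
    ring
  have hU₀ := fun y hy => (hU y hy).1
  rw [hψ, Rnum_quadInFst_const_div isOpen_Ioi hU₀ hh hh₁ hh₂ hθ,
    detg_quadInFst_const_div isOpen_Ioi hU₀ hh hh₁ hθ]
  obtain ⟨hθ0, hθc⟩ := hU θ2 hθ
  field_simp
  ring

/-- The group-invariant solution from `X₈ + aX₆`: for `λ ≠ 0`, `c₁ ≠ 0`, `a ≠ 0`,
`ψ(θ¹,θ²) = [(θ²-c₁)ln(θ²-c₁) - θ² ln θ²]/(4c₁λ) + (θ¹)²/(2aθ²) + c₂θ² + c₃` satisfies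
the constant-curvature equation on any open set where `θ² > max(0, c₁)`. -/
theorem invariant_solution_X8aX6 (lam : ℝ) (hlam : lam ≠ 0) (c1 a c2 c3 : ℝ)
    (hc1 : c1 ≠ 0) (ha : a ≠ 0) :
    let ψ : ℝ → ℝ → ℝ := fun θ1 θ2 =>
      ((θ2 - c1) * Real.log (θ2 - c1) - θ2 * Real.log θ2) / (4 * c1 * lam)
        + θ1 ^ 2 / (2 * a * θ2) + c2 * θ2 + c3
    ∀ θ1 θ2, max 0 c1 < θ2 →
      Rnum ψ θ1 θ2 = 4 * lam * (detg ψ θ1 θ2) ^ 2 :=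
  invariant_solution_X8aX6_general lam c1 a c2 c3 hc1
end
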